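/- Let α > 0 and let X be a real random variable such that E[|X|^{kα}] ≤ k!·S²·R^{k−2}/2 for every integer k ≥ 2, for some constants S, R > 0. Then for every t ≥ (2·max(S,R))^{1/α} one has E[exp((|X|/t)^α)] ≤ 2; in particular the α-exponential Orlicz norm satisfies ‖X‖_{Ψ_α} ≤ (2·max(S,R))^{1/α} ≤ 2·max(S,R)^{1/α} when α ≥ 1. -/

import Mathlib

/-!
Put `Y = |X|^α` and `M = 2 max(S, R)`. Expanding `exp (Y / M)` as a power series, the Bernstein
condition bounds the `k`-th term of `E[exp (Y / M)]` by `(S/M)² (R/M)^(k-2) / 2 ≤ 2^(-k)` for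
`k ≥ 2`, and `E[Y] ≤ S` bounds the linear term by `1/2`; so the expectation is at most
`∑ 2^(-k) = 2`. For `t ≥ M^(1/α)` we have `t^α ≥ M`, hence `(|X|/t)^α ≤ Y / M`.
-/

open MeasureTheory

noncomputable section

/-- The `α`-exponential Orlicz norm `‖X‖_{Ψ_α} = inf {t > 0 : E[exp((|X|/t)^α)] ≤ 2}`. -/
def orliczNorm {Ω : Type*} [MeasurableSpace Ω] (μ : Measure Ω) (α : ℝ) (X : Ω → ℝ) : ℝ :=
  sInf {t : ℝ | 0 < t ∧ ∫⁻ ω, ENNReal.ofReal (Real.exp ((|X ω| / t) ^ α)) ∂μ ≤ 2}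

open scoped ENNReal Nat

section

variable {Ω : Type*} [MeasurableSpace Ω] {μ : Measure Ω}

theorem lintegral_ofReal_exp_eq_tsum {Y : Ω → ℝ} (hY : AEMeasurable Y μ)
    (hY0 : ∀ ω, 0 ≤ Y ω) :
    ∫⁻ ω, ENNReal.ofReal (Real.exp (Y ω)) ∂μ
      = ∑' k : ℕ, (∫⁻ ω, ENNReal.ofReal (Y ω ^ k) ∂μ) / k ! := by
  have hterm (k : ℕ) (y : ℝ) :
      ENNReal.ofReal (y ^ k / k !) = ENNReal.ofReal (y ^ k) * (k ! : ℝ≥0∞)⁻¹ := by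
    rw [ENNReal.ofReal_div_of_pos (by positivity), ENNReal.ofReal_natCast, div_eq_mul_inv]
  have hseries (ω : Ω) :
      ENNReal.ofReal (Real.exp (Y ω)) = ∑' k : ℕ, ENNReal.ofReal (Y ω ^ k / k !) := by
    rw [Real.exp_eq_exp_ℝ, NormedSpace.exp_eq_tsum_div]
    exact ENNReal.ofReal_tsum_of_nonneg (fun k => by have := hY0 ω; positivity)
      (Real.summable_pow_div_factorial _)
  simp_rw [hseries, hterm]
  rw [lintegral_tsum fun k => ((hY.pow_const k).ennreal_ofReal).mul_const _]
  simp_rw [div_eq_mul_inv]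
  congr 1; ext k
  exact lintegral_mul_const' _ _ (ENNReal.inv_ne_top.2 (mod_cast k.factorial_ne_zero))

theorem lintegral_ofReal_le_of_lintegral_sq_le [IsProbabilityMeasure μ] {Y : Ω → ℝ} {S : ℝ}
    (hS : 0 < S) (h2 : ∫⁻ ω, ENNReal.ofReal (Y ω ^ 2) ∂μ ≤ ENNReal.ofReal (S ^ 2)) :
    ∫⁻ ω, ENNReal.ofReal (Y ω) ∂μ ≤ ENNReal.ofReal S := by
  -- AM-GM: `y ≤ y² / (2S) + S / 2`
  have hamgm (y : ℝ) :
      ENNReal.ofReal y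
        ≤ ENNReal.ofReal (y ^ 2) * ENNReal.ofReal (2 * S)⁻¹ + ENNReal.ofReal (S / 2) := by
    rw [← ENNReal.ofReal_mul (sq_nonneg y),
      ← ENNReal.ofReal_add (by positivity) (by positivity)]
    refine ENNReal.ofReal_le_ofReal ?_
    have : 0 ≤ (y - S) ^ 2 * (2 * S)⁻¹ := by positivity
    nlinarith [mul_inv_cancel₀ (by positivity : (2 * S) ≠ 0)]
  calc ∫⁻ ω, ENNReal.ofReal (Y ω) ∂μ
      ≤ ∫⁻ ω, ENNReal.ofReal (Y ω ^ 2) * ENNReal.ofReal (2 * S)⁻¹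
          + ENNReal.ofReal (S / 2) ∂μ := lintegral_mono fun ω => hamgm (Y ω)
    _ = (∫⁻ ω, ENNReal.ofReal (Y ω ^ 2) ∂μ) * ENNReal.ofReal (2 * S)⁻¹
          + ENNReal.ofReal (S / 2) := by
        rw [lintegral_add_right _ measurable_const, lintegral_mul_const' _ _ ENNReal.ofReal_ne_top,
          lintegral_const, measure_univ, mul_one]
    _ ≤ ENNReal.ofReal (S ^ 2) * ENNReal.ofReal (2 * S)⁻¹ + ENNReal.ofReal (S / 2) := by gcongr
    _ = ENNReal.ofReal S := by
        rw [← ENNReal.ofReal_mul (by positivity),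
          ← ENNReal.ofReal_add (by positivity) (by positivity)]
        congr 1
        field_simp
        ring

def BernsteinMoments (μ : Measure Ω) (Y : Ω → ℝ) (S R : ℝ) : Prop :=
  ∀ k : ℕ, 2 ≤ k →
    ∫⁻ ω, ENNReal.ofReal (Y ω ^ k) ∂μ ≤ ENNReal.ofReal (k ! * S ^ 2 * R ^ (k - 2) / 2)

namespace BernsteinMoments

variable {Y : Ω → ℝ} {S R : ℝ}

theorem div_const (h : BernsteinMoments μ Y S R) {c : ℝ} (hc : 0 < c) :
    BernsteinMoments μ (fun ω => Y ω / c) (S / c) (R / c) := by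
  intro k hk
  obtain ⟨n, rfl⟩ := Nat.exists_eq_add_of_le' hk
  have hscale (a : ℝ) :
      ENNReal.ofReal (a / c ^ (n + 2)) = ENNReal.ofReal a * ENNReal.ofReal (c ^ (n + 2))⁻¹ := by
    rw [div_eq_mul_inv, ENNReal.ofReal_mul' (by positivity)]
  simp_rw [div_pow, hscale]
  rw [lintegral_mul_const' _ _ ENNReal.ofReal_ne_top]
  calc (∫⁻ ω, ENNReal.ofReal (Y ω ^ (n + 2)) ∂μ) * ENNReal.ofReal (c ^ (n + 2))⁻¹
      ≤ ENNReal.ofReal ((n + 2) ! * S ^ 2 * R ^ (n + 2 - 2) / 2)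
          * ENNReal.ofReal (c ^ (n + 2))⁻¹ := by
        gcongr; exact h _ hk
    _ = _ := by
        rw [← ENNReal.ofReal_mul' (by positivity)]
        congr 1
        simp only [Nat.add_sub_cancel, pow_add]
        field_simp

theorem lintegral_le [IsProbabilityMeasure μ] (h : BernsteinMoments μ Y S R) (hS : 0 < S) :
    ∫⁻ ω, ENNReal.ofReal (Y ω) ∂μ ≤ ENNReal.ofReal S :=
  lintegral_ofReal_le_of_lintegral_sq_le hS <| by simpa [mul_div_assoc] using h 2 le_rfl

theorem lintegral_pow_div_factorial_le [IsProbabilityMeasure μ] (h : BernsteinMoments μ Y S R)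
    (hS : 0 < S) (hS2 : S ≤ 1 / 2) (hR : 0 ≤ R) (hR2 : R ≤ 1 / 2) (k : ℕ) :
    (∫⁻ ω, ENNReal.ofReal (Y ω ^ k) ∂μ) / k ! ≤ 2⁻¹ ^ k := by
  have hhalf : ENNReal.ofReal (1 / 2) = 2⁻¹ := by
    rw [one_div, ENNReal.ofReal_inv_of_pos two_pos, ENNReal.ofReal_ofNat]
  rcases k with _ | _ | n
  · simp
  · simp only [zero_add, pow_one, Nat.factorial_one, Nat.cast_one, div_one, ← hhalf]
    exact (h.lintegral_le hS).trans (ENNReal.ofReal_le_ofReal hS2)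
  · have hfac : ENNReal.ofReal ((n + 2) ! * S ^ 2 * R ^ (n + 2 - 2) / 2)
        = ENNReal.ofReal (S ^ 2 * R ^ n / 2) * (n + 2) ! := by
      rw [Nat.add_sub_cancel, ← ENNReal.ofReal_natCast, ← ENNReal.ofReal_mul (by positivity)]
      ring_nf
    calc (∫⁻ ω, ENNReal.ofReal (Y ω ^ (n + 2)) ∂μ) / (n + 2) !
        ≤ ENNReal.ofReal (S ^ 2 * R ^ n / 2) * (n + 2) ! / (n + 2) ! := by
          rw [← hfac]; gcongr; exact h _ le_add_self
      _ = ENNReal.ofReal (S ^ 2 * R ^ n / 2) :=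
          ENNReal.mul_div_cancel_right (by exact_mod_cast Nat.factorial_ne_zero _) (by simp)
      _ ≤ ENNReal.ofReal ((1 / 2) ^ (n + 2)) := by
          refine ENNReal.ofReal_le_ofReal ?_
          calc S ^ 2 * R ^ n / 2 ≤ (1 / 2) ^ 2 * (1 / 2) ^ n / 2 := by gcongr
            _ ≤ (1 / 2) ^ (n + 2) := by
                rw [pow_add]; nlinarith [pow_pos (one_half_pos (α := ℝ)) n]
      _ = 2⁻¹ ^ (n + 2) := by rw [ENNReal.ofReal_pow (by norm_num), hhalf]

theorem lintegral_exp_le_two [IsProbabilityMeasure μ] (h : BernsteinMoments μ Y S R)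
    (hY : AEMeasurable Y μ) (hY0 : ∀ ω, 0 ≤ Y ω)
    (hS : 0 < S) (hS2 : S ≤ 1 / 2) (hR : 0 ≤ R) (hR2 : R ≤ 1 / 2) :
    ∫⁻ ω, ENNReal.ofReal (Real.exp (Y ω)) ∂μ ≤ 2 :=
  calc ∫⁻ ω, ENNReal.ofReal (Real.exp (Y ω)) ∂μ
      = ∑' k : ℕ, (∫⁻ ω, ENNReal.ofReal (Y ω ^ k) ∂μ) / k ! :=
        lintegral_ofReal_exp_eq_tsum hY hY0
    _ ≤ ∑' k : ℕ, 2⁻¹ ^ k :=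
        ENNReal.tsum_le_tsum (h.lintegral_pow_div_factorial_le hS hS2 hR hR2)
    _ = 2 := by rw [ENNReal.tsum_geometric, ENNReal.one_sub_inv_two, inv_inv]

end BernsteinMoments

end

/-- **Bernstein moment condition implies an Orlicz norm bound.** If
`E[|X|^(kα)] ≤ k! S² R^(k-2) / 2` for all integers `k ≥ 2`, then for every
`t ≥ (2 max(S,R))^(1/α)` one has `E[exp((|X|/t)^α)] ≤ 2`; in particular
`‖X‖_{Ψ_α} ≤ (2 max(S,R))^(1/α)`, which is `≤ 2 max(S,R)^(1/α)` when `α ≥ 1`. -/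
theorem bernstein_moment_to_orlicz
    {Ω : Type*} [MeasurableSpace Ω] (μ : Measure Ω) [IsProbabilityMeasure μ]
    (α S R : ℝ) (hα : 0 < α) (hS : 0 < S) (hR : 0 < R)
    (X : Ω → ℝ) (hXmeas : Measurable X)
    (hmom : ∀ k : ℕ, 2 ≤ k →
      ∫⁻ ω, ENNReal.ofReal (|X ω| ^ ((k : ℝ) * α)) ∂μ
        ≤ ENNReal.ofReal ((k.factorial : ℝ) * S ^ 2 * R ^ (k - 2) / 2)) :
    (∀ t : ℝ, (2 * max S R) ^ (1 / α) ≤ t →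
        ∫⁻ ω, ENNReal.ofReal (Real.exp ((|X ω| / t) ^ α)) ∂μ ≤ 2)
    ∧ orliczNorm μ α X ≤ (2 * max S R) ^ (1 / α)
    ∧ (1 ≤ α → (2 * max S R) ^ (1 / α) ≤ 2 * max S R ^ (1 / α)) := by
  set M := 2 * max S R
  have hM : 0 < M := by positivity
  have hmomα : BernsteinMoments μ (fun ω => |X ω| ^ α) S R := fun k hk => by
    simpa only [← Real.rpow_natCast, ← Real.rpow_mul (abs_nonneg _), mul_comm] using hmom k hk
  have hexp : ∫⁻ ω, ENNReal.ofReal (Real.exp (|X ω| ^ α / M)) ∂μ ≤ 2 :=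
    (hmomα.div_const hM).lintegral_exp_le_two (by fun_prop) (fun ω => by positivity)
      (by positivity) (by rw [div_le_iff₀ hM]; linarith [le_max_left S R]) (by positivity)
      (by rw [div_le_iff₀ hM]; linarith [le_max_right S R])
  have hbound (t : ℝ) (ht : M ^ (1 / α) ≤ t) :
      ∫⁻ ω, ENNReal.ofReal (Real.exp ((|X ω| / t) ^ α)) ∂μ ≤ 2 := by
    have ht0 : 0 < t := (by positivity : 0 < M ^ (1 / α)).trans_le ht
    have hMt : M ≤ t ^ α :=
      (Real.rpow_inv_le_iff_of_pos hM.le ht0.le hα).1 (by rwa [one_div] at ht)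
    refine le_trans (lintegral_mono fun ω => ?_) hexp
    rw [Real.div_rpow (abs_nonneg _) ht0.le]
    gcongr
  refine ⟨hbound, csInf_le ⟨0, fun t ht => ht.1.le⟩ ⟨by positivity, hbound _ le_rfl⟩,
    fun hα1 => ?_⟩
  rw [Real.mul_rpow zero_le_two (by positivity)]
  gcongr
  exact Real.rpow_le_self_of_one_le one_le_two (by rwa [div_le_one hα])
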